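/- Let M be a nonempty finite set and A = (M → ℂ) the algebra of complex functions on M. The assignment E ↦ (Ω¹_E, d_E) induces a bijection between the set of irreflexive relations E ⊆ M × M (i.e. subsets of M × M minus the diagonal) and the set of isomorphism classes of first-order differential calculi on A, where an isomorphism of first-order differential calculi (Ω¹, d) and (Ω¹', d') is an A-bimodule isomorphism Φ : Ω¹ → Ω¹' with Φ∘d = d'. -/

import Mathlib

noncomputable section

namespace GraphClassification

/-- A first-order differential calculus on the algebra `A = M → ℂ` of functions
on a finite set `M`: an `A`-bimodule `Ω` (left `A`-module, right `A`-module via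
`Aᵐᵒᵖ`, commuting actions, compatible with the ℂ-structure) together with a
ℂ-linear map `d : A → Ω` satisfying the Leibniz rule and such that `Ω` is
spanned over ℂ by `{f·dg}`. -/
structure FODC (M : Type) [Fintype M] [DecidableEq M] where
  Ω : Type
  [addCommGroup : AddCommGroup Ω]
  [modL : Module (M → ℂ) Ω]
  [modR : Module (M → ℂ)ᵐᵒᵖ Ω]
  [modC : Module ℂ Ω]
  [smulComm : SMulCommClass (M → ℂ) (M → ℂ)ᵐᵒᵖ Ω]
  [towerL : IsScalarTower ℂ (M → ℂ) Ω]
  [towerR : IsScalarTower ℂ (M → ℂ)ᵐᵒᵖ Ω]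
  d : (M → ℂ) → Ω
  d_linear : IsLinearMap ℂ d
  leibniz : ∀ f g : M → ℂ, d (f * g) = f • d g + MulOpposite.op g • d f
  spanning : Submodule.span ℂ {x : Ω | ∃ f g : M → ℂ, x = f • d g} = ⊤

attribute [instance] FODC.addCommGroup FODC.modL FODC.modR FODC.modC
  FODC.smulComm FODC.towerL FODC.towerR

variable {M : Type} [Fintype M] [DecidableEq M]

section GraphCalc

variable (E : Set (M × M))

/-- Left module structure on the graph 1-forms: `(f·ω)(x,y) = f(x)ω(x,y)`. -/
instance grModL : Module (M → ℂ) (↥E → ℂ) where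
  smul f ω := fun e => f (e : M × M).1 * ω e
  one_smul ω := funext fun e => one_mul _
  mul_smul f g ω := funext fun e =>
    show (f * g) (e : M × M).1 * ω e = f (e : M × M).1 * (g (e : M × M).1 * ω e) by
      rw [Pi.mul_apply, mul_assoc]
  smul_zero f := funext fun e => mul_zero _
  smul_add f ω₁ ω₂ := funext fun e => mul_add _ _ _
  add_smul f g ω := funext fun e =>
    show (f + g) (e : M × M).1 * ω e =
        f (e : M × M).1 * ω e + g (e : M × M).1 * ω e by
      rw [Pi.add_apply, add_mul]
  zero_smul ω := funext fun e => zero_mul _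

/-- Right module structure on the graph 1-forms: `(ω·g)(x,y) = ω(x,y)g(y)`. -/
instance grModR : Module (M → ℂ)ᵐᵒᵖ (↥E → ℂ) where
  smul f ω := fun e => f.unop (e : M × M).2 * ω e
  one_smul ω := funext fun e => one_mul _
  mul_smul f g ω := funext fun e =>
    show (f * g).unop (e : M × M).2 * ω e =
        f.unop (e : M × M).2 * (g.unop (e : M × M).2 * ω e) by
      rw [MulOpposite.unop_mul, Pi.mul_apply]; ring
  smul_zero f := funext fun e => mul_zero _
  smul_add f ω₁ ω₂ := funext fun e => mul_add _ _ _
  add_smul f g ω := funext fun e =>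
    show (f + g).unop (e : M × M).2 * ω e =
        f.unop (e : M × M).2 * ω e + g.unop (e : M × M).2 * ω e by
      rw [MulOpposite.unop_add, Pi.add_apply, add_mul]
  zero_smul ω := funext fun e => zero_mul _

instance grSMulComm : SMulCommClass (M → ℂ) (M → ℂ)ᵐᵒᵖ (↥E → ℂ) where
  smul_comm f g ω := funext fun e =>
    show f (e : M × M).1 * (g.unop (e : M × M).2 * ω e) =
        g.unop (e : M × M).2 * (f (e : M × M).1 * ω e) by ring

instance grTowerL : IsScalarTower ℂ (M → ℂ) (↥E → ℂ) where
  smul_assoc c f ω := funext fun e =>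
    show (c • f) (e : M × M).1 * ω e = c • (f (e : M × M).1 * ω e) by
      rw [Pi.smul_apply, smul_eq_mul, smul_eq_mul, mul_assoc]

instance grTowerR : IsScalarTower ℂ (M → ℂ)ᵐᵒᵖ (↥E → ℂ) where
  smul_assoc c f ω := funext fun e =>
    show (c • f).unop (e : M × M).2 * ω e = c • (f.unop (e : M × M).2 * ω e) by
      rw [MulOpposite.unop_smul, Pi.smul_apply, smul_eq_mul, smul_eq_mul, mul_assoc]

/-- The graph first-order differential calculus `(Ω¹_E, d_E)` associated to an
irreflexive relation `E ⊆ M × M`: `Ω¹_E = E → ℂ`, bimodule structure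
`(f·ω·g)(x,y) = f(x)ω(x,y)g(y)`, and `(d_E f)(x,y) = f(y) - f(x)`. -/
def graphFODC (hE : ∀ x : M, (x, x) ∉ E) : FODC M where
  Ω := ↥E → ℂ
  d f := fun e => f (e : M × M).2 - f (e : M × M).1
  d_linear := by
    constructor
    · intro f g; funext e
      show (f + g) (e : M × M).2 - (f + g) (e : M × M).1 = _
      rw [Pi.add_apply, Pi.add_apply]
      show _ = (f (e : M × M).2 - f (e : M × M).1) +
        (g (e : M × M).2 - g (e : M × M).1)
      ring
    · intro c f; funext e
      show (c • f) (e : M × M).2 - (c • f) (e : M × M).1 = _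
      rw [Pi.smul_apply, Pi.smul_apply]
      show _ = c • (f (e : M × M).2 - f (e : M × M).1)
      rw [smul_eq_mul, smul_eq_mul, smul_eq_mul]
      ring
  leibniz := by
    intro f g; funext e
    show (f * g) (e : M × M).2 - (f * g) (e : M × M).1 =
        f (e : M × M).1 * (g (e : M × M).2 - g (e : M × M).1) +
          g (e : M × M).2 * (f (e : M × M).2 - f (e : M × M).1)
    rw [Pi.mul_apply, Pi.mul_apply]
    ring
  spanning := by
    rw [Submodule.eq_top_iff']
    intro ω
    haveI : Finite ↥E := Subtype.finite
    haveI := Fintype.ofFinite ↥E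
    classical
    have hrep : ω = ∑ e₀ : ↥E, ω e₀ • (fun e : ↥E => if e = e₀ then (1 : ℂ) else 0) := by
      funext e
      simp [Finset.sum_apply, Pi.smul_apply]
    rw [hrep]
    refine Submodule.sum_mem _ fun e₀ _ => Submodule.smul_mem _ _ ?_
    apply Submodule.subset_span
    refine ⟨(fun z => if z = (e₀ : M × M).1 then 1 else 0),
      (fun z => if z = (e₀ : M × M).2 then 1 else 0), ?_⟩
    have hne : (e₀ : M × M).1 ≠ (e₀ : M × M).2 := by
      intro hcontra
      have h2 := e₀.2
      have : ((e₀ : M × M).1, (e₀ : M × M).1) ∈ E := by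
        rw [show ((e₀ : M × M).1, (e₀ : M × M).1) = (e₀ : M × M) from by
          ext <;> simp [hcontra]]
        exact h2
      exact hE _ this
    funext e
    show (if e = e₀ then (1 : ℂ) else 0) =
      (if (e : M × M).1 = (e₀ : M × M).1 then (1 : ℂ) else 0) *
        ((if (e : M × M).2 = (e₀ : M × M).2 then (1 : ℂ) else 0) -
          (if (e : M × M).1 = (e₀ : M × M).2 then (1 : ℂ) else 0))
    by_cases h : e = e₀
    · subst h
      simp [hne]
    · simp only [if_neg h]
      have hne2 : (e : M × M) ≠ (e₀ : M × M) := fun hc => h (Subtype.ext hc)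
      by_cases h1 : (e : M × M).1 = (e₀ : M × M).1
      · have h2 : (e : M × M).2 ≠ (e₀ : M × M).2 := fun hc => hne2 (Prod.ext h1 hc)
        by_cases h3 : (e : M × M).1 = (e₀ : M × M).2 <;> simp [h1, h2, h3] <;> exact hne
      · simp [h1]

end GraphCalc

/-- Isomorphism of first-order differential calculi: an additive bijection
intertwining both module structures and the differentials. -/
def FODCIso (C C' : FODC M) : Prop :=
  ∃ Φ : C.Ω ≃+ C'.Ω,
    (∀ (f : M → ℂ) (x : C.Ω), Φ (f • x) = f • Φ x) ∧
    (∀ (f : (M → ℂ)ᵐᵒᵖ) (x : C.Ω), Φ (f • x) = f • Φ x) ∧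
    (∀ f : M → ℂ, Φ (C.d f) = C'.d f)

/-!
Left multiplication by `δ_x` and right multiplication by `δ_y` are commuting idempotents summing
to the identity, so every bimodule splits into blocks `δ_x Ω δ_y`. In a calculus the Leibniz rule
gives `δ_x (dg) δ_y = (g y - g x) e_{xy}` with `e_{xy} = δ_x (dδ_y) δ_y`; with the spanning
condition this shows that each block is spanned by `e_{xy}`, and `e_{xx} = 0`. Hence the nonzero
`e_{xy}` form a basis of `Ω` indexed by an irreflexive relation `E`, and expanding in this basis is
a bimodule isomorphism `Ω¹_E ≃ Ω` carrying `d_E` to `d`. Isomorphisms of calculi preserve the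
`e_{xy}`, and in `Ω¹_E` the form `e_{xy}` is the indicator of the edge `(x, y)`, so `E` is
determined by the calculus.
-/

open MulOpposite

section BlockProjection

variable {ι R Ω : Type*} [DecidableEq ι]

lemma single_one_mul [Semiring R] (x : ι) (f : ι → R) :
    Pi.single x 1 * f = f x • Pi.single x 1 := by
  ext z; by_cases h : z = x <;> simp [h]

lemma mul_single_one [Semiring R] (f : ι → R) (x : ι) :
    f * Pi.single x 1 = f x • Pi.single x 1 := by
  ext z; by_cases h : z = x <;> simp [h]

variable [CommSemiring R] [AddCommMonoid Ω] [Module (ι → R) Ω] [Module (ι → R)ᵐᵒᵖ Ω]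
  [Module R Ω] [IsScalarTower R (ι → R) Ω] [IsScalarTower R (ι → R)ᵐᵒᵖ Ω]

variable (R) in
def blockProj (x y : ι) : Ω →ₗ[R] Ω :=
  DistribSMul.toLinearMap R Ω (Pi.single x 1 : ι → R) ∘ₗ
    DistribSMul.toLinearMap R Ω (op (Pi.single y 1 : ι → R))

lemma blockProj_apply (x y : ι) (ω : Ω) :
    blockProj R x y ω = (Pi.single x 1 : ι → R) • op (Pi.single y 1 : ι → R) • ω :=
  rfl

lemma smul_blockProj (f : ι → R) (x y : ι) (ω : Ω) :
    f • blockProj R x y ω = f x • blockProj R x y ω := by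
  rw [blockProj_apply, smul_smul, mul_single_one, smul_assoc]

lemma blockProj_op_smul (g : ι → R) (x y : ι) (ω : Ω) :
    blockProj R x y (op g • ω) = g y • blockProj R x y ω := by
  rw [blockProj_apply, smul_smul, ← op_mul, mul_single_one, op_smul, smul_assoc,
    smul_comm, blockProj_apply]

lemma sum_blockProj [Fintype ι] (ω : Ω) : ∑ p : ι × ι, blockProj R p.1 p.2 ω = ω := by
  have h : ∑ x : ι, (Pi.single x 1 : ι → R) = 1 := Finset.univ_sum_single 1
  simp only [blockProj_apply, Fintype.sum_prod_type, ← Finset.smul_sum, ← Finset.sum_smul,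
    ← Finset.op_sum, h, op_one, one_smul]

variable [SMulCommClass (ι → R) (ι → R)ᵐᵒᵖ Ω]

lemma op_smul_blockProj (g : ι → R) (x y : ι) (ω : Ω) :
    op g • blockProj R x y ω = g y • blockProj R x y ω := by
  rw [blockProj_apply, ← smul_comm (Pi.single x 1 : ι → R) (op g), smul_smul, ← op_mul,
    single_one_mul, op_smul, smul_assoc, smul_comm]

lemma blockProj_smul (f : ι → R) (x y : ι) (ω : Ω) :
    blockProj R x y (f • ω) = f x • blockProj R x y ω := by
  rw [blockProj_apply, ← smul_comm f (op (Pi.single y 1 : ι → R)), smul_smul, single_one_mul,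
    smul_assoc, blockProj_apply]

lemma blockProj_blockProj (a b x y : ι) (ω : Ω) :
    blockProj R a b (blockProj R x y ω) = if (x, y) = (a, b) then blockProj R x y ω else 0 := by
  conv_lhs => rw [blockProj_apply (R := R) x y, blockProj_smul, blockProj_op_smul, smul_smul]
  by_cases hx : x = a <;> by_cases hy : y = b <;> simp_all

end BlockProjection

namespace FODC

variable (C : FODC M)

def edgeForm (x y : M) : C.Ω := blockProj ℂ x y (C.d (Pi.single y 1))

lemma d_smul (c : ℂ) (f : M → ℂ) : C.d (c • f) = c • C.d f := C.d_linear.map_smul c f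

lemma smul_edgeForm (f : M → ℂ) (x y : M) : f • C.edgeForm x y = f x • C.edgeForm x y :=
  smul_blockProj ..

lemma op_smul_edgeForm (f : M → ℂ) (x y : M) : op f • C.edgeForm x y = f y • C.edgeForm x y :=
  op_smul_blockProj ..

lemma edgeForm_self (x : M) : C.edgeForm x x = 0 := by
  have h := congrArg (blockProj ℂ x x) (C.leibniz (Pi.single x 1) (Pi.single x 1))
  rw [mul_single_one, Pi.single_eq_same, one_smul, map_add, blockProj_smul, blockProj_op_smul,
    Pi.single_eq_same, one_smul] at h
  exact left_eq_add.1 h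

lemma blockProj_d (x y : M) (g : M → ℂ) :
    blockProj ℂ x y (C.d g) = (g y - g x) • C.edgeForm x y := by
  have h := congrArg (blockProj ℂ x y) (C.leibniz g (Pi.single y 1))
  rw [mul_single_one, d_smul, map_smul, map_add, blockProj_smul, blockProj_op_smul,
    Pi.single_eq_same, one_smul] at h
  rw [sub_smul, edgeForm, h, add_sub_cancel_left]

lemma blockProj_mem_span_edgeForm (x y : M) (ω : C.Ω) :
    blockProj ℂ x y ω ∈ ℂ ∙ C.edgeForm x y := by
  have hgen : {v : C.Ω | ∃ f g : M → ℂ, v = f • C.d g} ⊆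
      (ℂ ∙ C.edgeForm x y).comap (blockProj ℂ x y) := by
    rintro _ ⟨f, g, rfl⟩
    rw [SetLike.mem_coe, Submodule.mem_comap, blockProj_smul, blockProj_d, smul_smul]
    exact Submodule.smul_mem _ _ (Submodule.mem_span_singleton_self _)
  exact Submodule.span_le.2 hgen (C.spanning ▸ Submodule.mem_top)

def support : Set (M × M) := {p | C.edgeForm p.1 p.2 ≠ 0}

instance : Fintype C.support := Fintype.ofFinite _

lemma diag_notMem_support (x : M) : (x, x) ∉ C.support := fun h => h (C.edgeForm_self x)

lemma linearIndependent_edgeForm :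
    LinearIndependent ℂ fun p : C.support => C.edgeForm p.1.1 p.1.2 := by
  rw [Fintype.linearIndependent_iff]
  intro c hsum p
  have h := congrArg (blockProj ℂ p.1.1 p.1.2) hsum
  rw [map_sum, map_zero, Finset.sum_eq_single p (fun q _ hqp => ?_) (by simp), map_smul,
    edgeForm, blockProj_blockProj, if_pos rfl] at h
  · exact (smul_eq_zero.1 h).resolve_right p.2
  · rw [map_smul, edgeForm, blockProj_blockProj, if_neg, smul_zero]
    exact fun hqp' => hqp (Subtype.ext hqp')

lemma span_edgeForm :
    ⊤ ≤ Submodule.span ℂ (Set.range fun p : C.support => C.edgeForm p.1.1 p.1.2) := by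
  intro ω _
  rw [← sum_blockProj (ι := M) (R := ℂ) ω]
  refine Submodule.sum_mem _ fun p _ => ?_
  obtain ⟨c, hc⟩ := Submodule.mem_span_singleton.1 (C.blockProj_mem_span_edgeForm p.1 p.2 ω)
  rw [← hc]
  by_cases hp : p ∈ C.support
  · exact Submodule.smul_mem _ _ (Submodule.subset_span ⟨⟨p, hp⟩, rfl⟩)
  · rw [show C.edgeForm p.1 p.2 = 0 from not_not.1 hp, smul_zero]
    exact zero_mem _

def edgeBasis : Module.Basis C.support ℂ C.Ω :=
  .mk C.linearIndependent_edgeForm C.span_edgeForm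

lemma edgeBasis_equivFun_symm_apply (c : C.support → ℂ) :
    C.edgeBasis.equivFun.symm c = ∑ p, c p • C.edgeForm p.1.1 p.1.2 := by
  simp [edgeBasis, Module.Basis.equivFun_symm_apply]

lemma sum_support_smul_edgeForm (c : M × M → ℂ) :
    ∑ p : C.support, c p • C.edgeForm p.1.1 p.1.2 = ∑ p, c p • C.edgeForm p.1 p.2 :=
  Fintype.sum_of_injective Subtype.val Subtype.val_injective _ _
    (fun p hp => by rw [not_not.1 fun h => hp ⟨⟨p, h⟩, rfl⟩, smul_zero]) fun _ => rfl

end FODC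

section GraphCalculus

variable {E : Set (M × M)} (hE : ∀ x : M, (x, x) ∉ E)

lemma graphFODC_edgeForm_apply (x y : M) (e : E) :
    (graphFODC E hE).edgeForm x y e = if e.1 = (x, y) then 1 else 0 := by
  obtain ⟨⟨a, b⟩, he⟩ := e
  have hab : a ≠ b := by rintro rfl; exact hE a he
  change (Pi.single x 1 : M → ℂ) a *
    ((Pi.single y 1 : M → ℂ) b * ((Pi.single y 1 : M → ℂ) b - (Pi.single y 1 : M → ℂ) a)) = _
  by_cases ha : a = x <;> by_cases hb : b = y <;> simp_all

lemma support_graphFODC : (graphFODC E hE).support = E := by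
  ext p
  refine ⟨fun hp => by_contra fun hpE => hp (funext fun e => ?_), fun hpE h => ?_⟩
  · rw [graphFODC_edgeForm_apply, if_neg (show e.1 ≠ p from fun he => hpE (he ▸ e.2))]
    rfl
  · have h1 := congrFun h ⟨p, hpE⟩
    rw [graphFODC_edgeForm_apply, if_pos rfl] at h1
    exact one_ne_zero h1

end GraphCalculus

lemma FODCIso.support_eq {C C' : FODC M} (h : FODCIso C C') : C.support = C'.support := by
  obtain ⟨Φ, hL, hR, hd⟩ := h
  have hΦ : ∀ x y, Φ (C.edgeForm x y) = C'.edgeForm x y := fun x y => by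
    rw [FODC.edgeForm, blockProj_apply, hL, hR, hd]
    rfl
  ext p
  simp only [FODC.support, ← hΦ, ne_eq, AddEquivClass.map_eq_zero_iff]

lemma FODC.fodcIso_graphFODC_support (C : FODC M) :
    FODCIso (graphFODC C.support C.diag_notMem_support) C := by
  refine ⟨C.edgeBasis.equivFun.symm.toAddEquiv, fun f (ω : C.support → ℂ) => ?_,
    fun f (ω : C.support → ℂ) => ?_, fun f => ?_⟩
  · change C.edgeBasis.equivFun.symm (fun p => f p.1.1 * ω p) = f • C.edgeBasis.equivFun.symm ω
    simp only [edgeBasis_equivFun_symm_apply, Finset.smul_sum, smul_comm f, smul_edgeForm,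
      mul_smul]
    exact Finset.sum_congr rfl fun _ _ => smul_comm _ _ _
  · change C.edgeBasis.equivFun.symm (fun p => f.unop p.1.2 * ω p) =
      f • C.edgeBasis.equivFun.symm ω
    rw [← op_unop f]
    simp only [edgeBasis_equivFun_symm_apply, Finset.smul_sum, smul_comm (op f.unop),
      op_smul_edgeForm, mul_smul, unop_op]
    exact Finset.sum_congr rfl fun _ _ => smul_comm _ _ _
  · change C.edgeBasis.equivFun.symm (fun p => f p.1.2 - f p.1.1) = C.d f
    rw [edgeBasis_equivFun_symm_apply, sum_support_smul_edgeForm (c := fun p => f p.2 - f p.1)]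
    simp only [← blockProj_d, sum_blockProj]

theorem graph_calculi_classification (C : FODC M) :
    ∃! E : {E : Set (M × M) // ∀ x : M, (x, x) ∉ E},
      FODCIso (graphFODC E.1 E.2) C := by
  refine ⟨⟨C.support, C.diag_notMem_support⟩, C.fodcIso_graphFODC_support, ?_⟩
  rintro ⟨E, hE⟩ h
  exact Subtype.ext ((support_graphFODC hE).symm.trans h.support_eq)

end GraphClassification
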